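/- Let a ∈ ℝ^N, Φ(μ) := ⟨a, μ⟩, C ∈ ℝ^{N×N} symmetric, ε > 0, Γ := exp(−C/(2ε)) entrywise, ζ ∈ Δ^{N−1} with strictly positive entries, and α > 0. Then the vector μ* := exp(−a/(αε)) ⊙ (Γᵀ (ζ ⊘ (Γ exp(−a/(αε))))) , after noting it has nonnegative entries summing to 1, is the unique minimizer over μ ∈ Δ^{N−1} of the entropy-regularized Wasserstein proximal objective min_{M ∈ Π_N(μ,ζ)} ⟨(1/2)C + ε log M, M⟩ + (1/α)⟨a, μ⟩. In other words, the Sinkhorn-regularized Wasserstein proximal operator of a linear functional admits this closed form. -/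

import Mathlib

open Finset

noncomputable def ent (x : ℝ) : ℝ := if x = 0 then 0 else x * Real.log x

def transportPolytope {N : ℕ} (ξ η : Fin N → ℝ) : Set (Matrix (Fin N) (Fin N) ℝ) :=
  {M | (∀ i j, 0 ≤ M i j) ∧ (∀ i, ∑ j, M i j = ξ i) ∧ (∀ j, ∑ i, M i j = η j)}

noncomputable def entropicObjective {N : ℕ} (C : Matrix (Fin N) (Fin N) ℝ) (ε : ℝ)
    (M : Matrix (Fin N) (Fin N) ℝ) : ℝ :=
  ∑ i, ∑ j, ((1 / 2) * C i j * M i j + ε * ent (M i j))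

/-- The Sinkhorn-regularized Wasserstein proximal objective of the linear functional
`μ ↦ ⟨a, μ⟩`: entropic transport cost from `μ` to `ζ` plus `(1/α)⟨a, μ⟩`. -/
noncomputable def proxObjective {N : ℕ} (C : Matrix (Fin N) (Fin N) ℝ) (ε α : ℝ)
    (a ζ : Fin N → ℝ) (μ : Fin N → ℝ) : ℝ :=
  sInf {c : ℝ | ∃ M ∈ transportPolytope μ ζ, c = entropicObjective C ε M}
    + (1 / α) * ∑ j, a j * μ j

/-- The closed-form candidate
`μ* = exp(−a/(αε)) ⊙ (Γᵀ (ζ ⊘ (Γ exp(−a/(αε)))))`. -/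
noncomputable def muStar {N : ℕ} (Γ : Matrix (Fin N) (Fin N) ℝ) (ε α : ℝ)
    (a ζ : Fin N → ℝ) : Fin N → ℝ :=
  fun j => Real.exp (-(a j) / (α * ε)) *
    (∑ i, Γ i j * (ζ i / (∑ l, Γ i l * Real.exp (-(a l) / (α * ε)))))

/-!
Put `β = exp(−a/(αε))` and `Q = diag(β) Γᵀ diag(ζ ⊘ Γβ)`. The plan `Q` has column sums `ζ` and
row sums `μ*`, and as `C` is symmetric, `log Q i j = −C i j/(2ε) − a i/(αε) + log (ζ j/(Γβ) j)`.
Hence for every plan `M` with marginals `(μ, ζ)` the objective `⟨C/2 + ε log M, M⟩ + ⟨a, μ⟩/α`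
equals `ε KL(M ‖ Q) + B` for a constant `B`. By Gibbs' inequality every `μ` has value at least
`B`, attained at `μ*` by the plan `Q`. The infimum over plans is attained by compactness, so
a minimizer `μ` has an optimal plan `M` with `KL(M ‖ Q) = 0`, i.e. `M = Q` and `μ = μ*`.
-/

open InformationTheory Matrix

lemma ent_eq_mul_log : ent = fun x => x * Real.log x := by
  funext x
  unfold ent
  split_ifs with hx <;> simp [hx]

lemma mul_log_sub_mul_log_eq_klFun (x : ℝ) {q : ℝ} (hq : 0 < q) :
    x * Real.log x - x * Real.log q = q * klFun (x / q) + (x - q) := by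
  rcases eq_or_ne x 0 with rfl | hx
  · simp [klFun_zero]
  · rw [klFun_apply, Real.log_div hx hq.ne']
    field_simp
    ring

section MatrixKL

variable {ι κ : Type*} [Fintype ι] [Fintype κ]

/-- The generalized Kullback–Leibler divergence `∑ M log (M / Q) - M + Q`. -/
noncomputable def matrixKL (M Q : Matrix ι κ ℝ) : ℝ :=
  ∑ i, ∑ j, Q i j * klFun (M i j / Q i j)

variable {M Q : Matrix ι κ ℝ}

lemma matrixKL_nonneg (hM : ∀ i j, 0 ≤ M i j) (hQ : ∀ i j, 0 < Q i j) : 0 ≤ matrixKL M Q :=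
  sum_nonneg fun i _ => sum_nonneg fun j _ =>
    mul_nonneg (hQ i j).le (klFun_nonneg (div_nonneg (hM i j) (hQ i j).le))

lemma matrixKL_eq_zero_iff (hM : ∀ i j, 0 ≤ M i j) (hQ : ∀ i j, 0 < Q i j) :
    matrixKL M Q = 0 ↔ M = Q := by
  have hterm : ∀ i j, 0 ≤ Q i j * klFun (M i j / Q i j) := fun i j =>
    mul_nonneg (hQ i j).le (klFun_nonneg (div_nonneg (hM i j) (hQ i j).le))
  refine ⟨fun h => ?_, fun h => ?_⟩
  · ext i j
    have hrow := (sum_eq_zero_iff_of_nonneg fun i _ => sum_nonneg fun j _ => hterm i j).1 h i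
      (mem_univ i)
    have hij := (sum_eq_zero_iff_of_nonneg fun j _ => hterm i j).1 hrow j (mem_univ j)
    rw [mul_eq_zero, or_iff_right (hQ i j).ne',
      klFun_eq_zero_iff (div_nonneg (hM i j) (hQ i j).le), div_eq_one_iff_eq (hQ i j).ne'] at hij
    exact hij
  · subst h
    simp [div_self (hQ _ _).ne', klFun_one, matrixKL]

lemma sum_mul_log_sub_mul_log_eq_matrixKL (hQ : ∀ i j, 0 < Q i j)
    (hmass : ∑ i, ∑ j, M i j = ∑ i, ∑ j, Q i j) :
    ∑ i, ∑ j, (M i j * Real.log (M i j) - M i j * Real.log (Q i j)) = matrixKL M Q := by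
  simp only [mul_log_sub_mul_log_eq_klFun _ (hQ _ _), sum_add_distrib, sum_sub_distrib, hmass,
    sub_self, add_zero, matrixKL]

end MatrixKL

section TransportPolytope

variable {N : ℕ}

lemma isCompact_transportPolytope (ξ η : Fin N → ℝ) : IsCompact (transportPolytope ξ η) := by
  have hclosed : IsClosed (transportPolytope ξ η) := by
    simp only [transportPolytope, Set.ofPred_and, Set.ofPred_forall]
    refine (isClosed_iInter fun i => isClosed_iInter fun j => ?_).inter
      ((isClosed_iInter fun i => ?_).inter (isClosed_iInter fun j => ?_))
    · exact isClosed_le continuous_const (by fun_prop)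
    · exact isClosed_eq (by fun_prop) continuous_const
    · exact isClosed_eq (by fun_prop) continuous_const
  refine (isCompact_univ_pi fun i => isCompact_univ_pi fun _ => isCompact_Icc (a := 0) (b := ξ i))
    |>.of_isClosed_subset hclosed ?_
  rintro M ⟨hnonneg, hrow, -⟩ i - j -
  exact ⟨hnonneg i j, hrow i ▸ single_le_sum (fun k _ => hnonneg i k) (mem_univ j)⟩

lemma vecMulVec_mem_transportPolytope {ξ η : Fin N → ℝ} (hξ : ξ ∈ stdSimplex ℝ (Fin N))
    (hη : η ∈ stdSimplex ℝ (Fin N)) : vecMulVec ξ η ∈ transportPolytope ξ η :=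
  ⟨fun i j => mul_nonneg (hξ.1 i) (hη.1 j),
    fun i => by simp [vecMulVec_apply, ← mul_sum, hη.2],
    fun j => by simp [vecMulVec_apply, ← sum_mul, hξ.2]⟩

lemma mem_stdSimplex_of_mem_transportPolytope {ξ η : Fin N → ℝ} {M : Matrix (Fin N) (Fin N) ℝ}
    (hM : M ∈ transportPolytope ξ η) (hη : η ∈ stdSimplex ℝ (Fin N)) :
    ξ ∈ stdSimplex ℝ (Fin N) := by
  obtain ⟨hnonneg, hrow, hcol⟩ := hM
  refine ⟨fun i => hrow i ▸ sum_nonneg fun j _ => hnonneg i j, ?_⟩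
  calc ∑ i, ξ i = ∑ i, ∑ j, M i j := by simp only [hrow]
    _ = ∑ j, ∑ i, M i j := sum_comm
    _ = 1 := by simp only [hcol, hη.2]

lemma continuous_entropicObjective (C : Matrix (Fin N) (Fin N) ℝ) (ε : ℝ) :
    Continuous (entropicObjective C ε) := by
  have hmulLog : Continuous fun x : ℝ => x * Real.log x := Real.continuous_mul_log
  unfold entropicObjective
  rw [ent_eq_mul_log]
  fun_prop

lemma isCompact_entropicObjective_values (C : Matrix (Fin N) (Fin N) ℝ) (ε : ℝ)
    (ξ η : Fin N → ℝ) :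
    IsCompact {c : ℝ | ∃ M ∈ transportPolytope ξ η, c = entropicObjective C ε M} := by
  have himage : {c : ℝ | ∃ M ∈ transportPolytope ξ η, c = entropicObjective C ε M} =
      entropicObjective C ε '' transportPolytope ξ η := by
    ext c
    simp [eq_comm]
  rw [himage]
  exact (isCompact_transportPolytope ξ η).image (continuous_entropicObjective C ε)

variable (C : Matrix (Fin N) (Fin N) ℝ) (ε α : ℝ) (a : Fin N → ℝ) {μ ζ : Fin N → ℝ}

lemma proxObjective_le {M : Matrix (Fin N) (Fin N) ℝ} (hM : M ∈ transportPolytope μ ζ) :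
    proxObjective C ε α a ζ μ ≤ entropicObjective C ε M + (1 / α) * ∑ j, a j * μ j :=
  add_le_add_left (csInf_le (isCompact_entropicObjective_values C ε μ ζ).bddBelow ⟨M, hM, rfl⟩) _

lemma exists_proxObjective_eq (hne : (transportPolytope μ ζ).Nonempty) :
    ∃ M ∈ transportPolytope μ ζ,
      proxObjective C ε α a ζ μ = entropicObjective C ε M + (1 / α) * ∑ j, a j * μ j := by
  obtain ⟨c, hc⟩ := hne
  obtain ⟨M, hM, hinf⟩ := (isCompact_entropicObjective_values C ε μ ζ).sInf_mem
    ⟨_, c, hc, rfl⟩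
  exact ⟨M, hM, by rw [proxObjective, hinf]⟩

end TransportPolytope

section ScaledPlan

variable {ι : Type*} [Fintype ι] (Γ : Matrix ι ι ℝ) (β ζ : ι → ℝ)

/-- The plan `diag(β) Γᵀ diag(ζ ⊘ Γβ)`. -/
noncomputable def scaledPlan : Matrix ι ι ℝ := fun i j => β i * Γ j i * (ζ j / (Γ *ᵥ β) j)

lemma sum_scaledPlan_row (i : ι) :
    ∑ j, scaledPlan Γ β ζ i j = β i * ∑ j, Γ j i * (ζ j / (Γ *ᵥ β) j) := by
  simp only [scaledPlan, mul_sum, mul_assoc]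

lemma sum_scaledPlan_col {j : ι} (hj : (Γ *ᵥ β) j ≠ 0) : ∑ i, scaledPlan Γ β ζ i j = ζ j := by
  have hΓβ : ∑ i, Γ j i * β i = (Γ *ᵥ β) j := rfl
  simp only [scaledPlan, ← sum_mul, mul_comm (β _), hΓβ]
  exact mul_div_cancel₀ _ hj

variable {Γ β ζ} (hΓ : ∀ i j, 0 < Γ i j) (hβ : ∀ i, 0 < β i) (hζ : ∀ j, 0 < ζ j)
include hΓ hβ

lemma mulVec_pos (j : ι) : 0 < (Γ *ᵥ β) j :=
  sum_pos (fun l _ => mul_pos (hΓ j l) (hβ l)) ⟨j, mem_univ j⟩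

include hζ

lemma scaledPlan_pos (i j : ι) : 0 < scaledPlan Γ β ζ i j :=
  mul_pos (mul_pos (hβ i) (hΓ j i)) (div_pos (hζ j) (mulVec_pos hΓ hβ j))

lemma log_scaledPlan (i j : ι) : Real.log (scaledPlan Γ β ζ i j) =
    Real.log (β i) + Real.log (Γ j i) + Real.log (ζ j / (Γ *ᵥ β) j) := by
  rw [scaledPlan, Real.log_mul (mul_pos (hβ i) (hΓ j i)).ne'
    (div_pos (hζ j) (mulVec_pos hΓ hβ j)).ne', Real.log_mul (hβ i).ne' (hΓ j i).ne']

end ScaledPlan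

section SinkhornProx

noncomputable def gibbsWeight {N : ℕ} (ε α : ℝ) (a : Fin N → ℝ) (i : Fin N) : ℝ :=
  Real.exp (-(a i) / (α * ε))

lemma gibbsWeight_pos {N : ℕ} (ε α : ℝ) (a : Fin N → ℝ) (i : Fin N) : 0 < gibbsWeight ε α a i :=
  Real.exp_pos _

variable {N : ℕ} {C Γ : Matrix (Fin N) (Fin N) ℝ} {ε : ℝ} (α : ℝ) (a : Fin N → ℝ) {ζ : Fin N → ℝ}

variable (hΓ : ∀ i j, Γ i j = Real.exp (-(C i j) / (2 * ε))) (hζ : ∀ j, 0 < ζ j)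
include hΓ hζ

lemma scaledPlan_mem_transportPolytope :
    scaledPlan Γ (gibbsWeight ε α a) ζ ∈ transportPolytope (muStar Γ ε α a ζ) ζ := by
  have hΓpos : ∀ i j, 0 < Γ i j := fun i j => hΓ i j ▸ Real.exp_pos _
  exact ⟨fun i j => (scaledPlan_pos hΓpos (gibbsWeight_pos ε α a) hζ i j).le,
    sum_scaledPlan_row _ _ _,
    fun j => sum_scaledPlan_col _ _ _ (mulVec_pos hΓpos (gibbsWeight_pos ε α a) j).ne'⟩

variable (hC : C.IsSymm) (hε : ε ≠ 0)
include hC hε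

lemma cost_add_ent_add_linear_eq (i j : Fin N) (x : ℝ) :
    1 / 2 * C i j * x + ε * ent x + 1 / α * a i * x =
      ε * (x * Real.log x - x * Real.log (scaledPlan Γ (gibbsWeight ε α a) ζ i j)) +
        ε * x * Real.log (ζ j / (Γ *ᵥ gibbsWeight ε α a) j) := by
  have hΓpos : ∀ i j, 0 < Γ i j := fun i j => hΓ i j ▸ Real.exp_pos _
  rw [log_scaledPlan hΓpos (gibbsWeight_pos ε α a) hζ, gibbsWeight, Real.log_exp, hΓ,
    Real.log_exp, hC.apply i j, ent_eq_mul_log]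
  field_simp
  ring

lemma entropicObjective_add_linear_eq {μ : Fin N → ℝ} {M : Matrix (Fin N) (Fin N) ℝ}
    (hM : M ∈ transportPolytope μ ζ) :
    entropicObjective C ε M + 1 / α * ∑ i, a i * μ i =
      ε * matrixKL M (scaledPlan Γ (gibbsWeight ε α a) ζ) +
        ε * ∑ j, ζ j * Real.log (ζ j / (Γ *ᵥ gibbsWeight ε α a) j) := by
  obtain ⟨-, hrow, hcol⟩ := hM
  have hΓpos : ∀ i j, 0 < Γ i j := fun i j => hΓ i j ▸ Real.exp_pos _
  set Q := scaledPlan Γ (gibbsWeight ε α a) ζ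
  set W := Γ *ᵥ gibbsWeight ε α a
  have hQcol : ∀ j, ∑ i, Q i j = ζ j := (scaledPlan_mem_transportPolytope α a hΓ hζ).2.2
  have hmass : ∑ i, ∑ j, M i j = ∑ i, ∑ j, Q i j :=
    calc ∑ i, ∑ j, M i j = ∑ j, ∑ i, M i j := sum_comm
      _ = ∑ j, ∑ i, Q i j := by simp only [hcol, hQcol]
      _ = ∑ i, ∑ j, Q i j := sum_comm
  calc entropicObjective C ε M + 1 / α * ∑ i, a i * μ i
      = ∑ i, ∑ j, (1 / 2 * C i j * M i j + ε * ent (M i j) + 1 / α * a i * M i j) := by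
        simp only [entropicObjective, ← hrow, mul_sum, ← sum_add_distrib, mul_assoc]
    _ = ∑ i, ∑ j, (ε * (M i j * Real.log (M i j) - M i j * Real.log (Q i j)) +
          ε * M i j * Real.log (ζ j / W j)) := by
        simp only [cost_add_ent_add_linear_eq α a hΓ hζ hC hε, Q, W]
    _ = ε * ∑ i, ∑ j, (M i j * Real.log (M i j) - M i j * Real.log (Q i j)) +
          ε * ∑ j, (∑ i, M i j) * Real.log (ζ j / W j) := by
        simp only [sum_add_distrib, mul_sum, sum_mul, mul_assoc]
        rw [sum_comm (f := fun i j => ε * (M i j * Real.log (ζ j / W j)))]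
    _ = _ := by
        rw [sum_mul_log_sub_mul_log_eq_matrixKL
          (scaledPlan_pos hΓpos (gibbsWeight_pos ε α a) hζ) hmass]
        simp only [hcol, Q]

lemma exists_proxObjective_eq_matrixKL (hζ₁ : ζ ∈ stdSimplex ℝ (Fin N)) {μ : Fin N → ℝ}
    (hμ : μ ∈ stdSimplex ℝ (Fin N)) :
    ∃ M ∈ transportPolytope μ ζ, proxObjective C ε α a ζ μ =
      ε * matrixKL M (scaledPlan Γ (gibbsWeight ε α a) ζ) +
        ε * ∑ j, ζ j * Real.log (ζ j / (Γ *ᵥ gibbsWeight ε α a) j) := by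
  obtain ⟨M, hM, hprox⟩ :=
    exists_proxObjective_eq C ε α a ⟨_, vecMulVec_mem_transportPolytope hμ hζ₁⟩
  exact ⟨M, hM, hprox.trans (entropicObjective_add_linear_eq α a hΓ hζ hC hε hM)⟩

lemma proxObjective_muStar_le :
    proxObjective C ε α a ζ (muStar Γ ε α a ζ) ≤
      ε * ∑ j, ζ j * Real.log (ζ j / (Γ *ᵥ gibbsWeight ε α a) j) := by
  have hQ := scaledPlan_mem_transportPolytope α a hΓ hζ
  have hKL := (matrixKL_eq_zero_iff hQ.1 (fun i j =>
    scaledPlan_pos (fun i j => hΓ i j ▸ Real.exp_pos _) (gibbsWeight_pos ε α a) hζ i j)).2 rfl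
  calc proxObjective C ε α a ζ (muStar Γ ε α a ζ)
      ≤ _ := proxObjective_le C ε α a hQ
    _ = _ := by rw [entropicObjective_add_linear_eq α a hΓ hζ hC hε hQ, hKL, mul_zero, zero_add]

end SinkhornProx

theorem sinkhorn_prox_of_linear_general {N d : ℕ} (θ : Fin N → EuclideanSpace ℝ (Fin d))
    (C : Matrix (Fin N) (Fin N) ℝ) (hC : ∀ i j, C i j = ‖θ i - θ j‖ ^ 2)
    (ε α : ℝ) (hε : 0 < ε)
    (Γ : Matrix (Fin N) (Fin N) ℝ) (hΓ : ∀ i j, Γ i j = Real.exp (-(C i j) / (2 * ε)))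
    (a ζ : Fin N → ℝ) (hζ : ζ ∈ stdSimplex ℝ (Fin N)) (hζpos : ∀ j, 0 < ζ j) :
    muStar Γ ε α a ζ ∈ stdSimplex ℝ (Fin N) ∧
    (∀ μ ∈ stdSimplex ℝ (Fin N),
      proxObjective C ε α a ζ (muStar Γ ε α a ζ) ≤ proxObjective C ε α a ζ μ) ∧
    (∀ μ ∈ stdSimplex ℝ (Fin N),
      (∀ μ' ∈ stdSimplex ℝ (Fin N), proxObjective C ε α a ζ μ ≤ proxObjective C ε α a ζ μ') →
      μ = muStar Γ ε α a ζ) := by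
  have hCsymm : C.IsSymm := IsSymm.ext fun i j => by rw [hC, hC, norm_sub_rev]
  have hQpos := scaledPlan_pos (fun i j => hΓ i j ▸ Real.exp_pos _) (gibbsWeight_pos ε α a) hζpos
  have hQ := scaledPlan_mem_transportPolytope α a hΓ hζpos
  have hstar := mem_stdSimplex_of_mem_transportPolytope hQ hζ
  have hle := proxObjective_muStar_le α a hΓ hζpos hCsymm hε.ne'
  have hvalue := fun μ (hμ : μ ∈ stdSimplex ℝ (Fin N)) =>
    exists_proxObjective_eq_matrixKL α a hΓ hζpos hCsymm hε.ne' hζ hμ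
  refine ⟨hstar, fun μ hμ => ?_, fun μ hμ hmin => ?_⟩
  · obtain ⟨M, hM, hprox⟩ := hvalue μ hμ
    rw [hprox]
    exact hle.trans (le_add_of_nonneg_left (mul_nonneg hε.le (matrixKL_nonneg hM.1 hQpos)))
  · obtain ⟨M, hM, hprox⟩ := hvalue μ hμ
    have hKL : matrixKL M (scaledPlan Γ (gibbsWeight ε α a) ζ) = 0 := by
      nlinarith [matrixKL_nonneg hM.1 hQpos, hmin _ hstar]
    have hMQ := (matrixKL_eq_zero_iff hM.1 hQpos).1 hKL
    funext i
    rw [← hM.2.1 i, hMQ, hQ.2.1 i]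

/-- The Sinkhorn-regularized Wasserstein proximal operator of a linear functional
admits the closed form `μ*`, which is the unique minimizer over the simplex. -/
theorem sinkhorn_prox_of_linear {N d : ℕ} (θ : Fin N → EuclideanSpace ℝ (Fin d))
    (C : Matrix (Fin N) (Fin N) ℝ) (hC : ∀ i j, C i j = ‖θ i - θ j‖ ^ 2)
    (ε α : ℝ) (hε : 0 < ε) (hα : 0 < α)
    (Γ : Matrix (Fin N) (Fin N) ℝ) (hΓ : ∀ i j, Γ i j = Real.exp (-(C i j) / (2 * ε)))
    (a ζ : Fin N → ℝ) (hζ : ζ ∈ stdSimplex ℝ (Fin N)) (hζpos : ∀ j, 0 < ζ j) :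
    muStar Γ ε α a ζ ∈ stdSimplex ℝ (Fin N) ∧
    (∀ μ ∈ stdSimplex ℝ (Fin N),
      proxObjective C ε α a ζ (muStar Γ ε α a ζ) ≤ proxObjective C ε α a ζ μ) ∧
    (∀ μ ∈ stdSimplex ℝ (Fin N),
      (∀ μ' ∈ stdSimplex ℝ (Fin N), proxObjective C ε α a ζ μ ≤ proxObjective C ε α a ζ μ') →
      μ = muStar Γ ε α a ζ) :=
  sinkhorn_prox_of_linear_general θ C hC ε α hε Γ hΓ a ζ hζ hζpos
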